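/- Finite convergence of the MM algorithm: any sequence (z^{(t)}) with z^{(t+1)} ∈ α(z^{(t)}) along which F is strictly decreasing is finite; consequently the MM algorithm terminates after finitely many iterations at a point satisfying the necessary conditions (C1) and (C2), and termination occurs at the first t with F(z^{(t)}) = F(z^{(t−1)}). -/

import Mathlib

/-!
Let `F_C` be the quadratic of a configuration `C` (one warping path per sample); it majorises
the Fréchet function `F` and touches it where `C` is optimal. If an MM step from `z` to `z'` uses
`C`, then `F z' ≤ min F_C ≤ F z`. Along a strictly decreasing trajectory the intervals
`[F z_{t+1}, F z_t]` of steps two apart are disjoint, so the configurations at even steps are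
pairwise distinct, which is impossible as there are finitely many warping paths. When instead
`F z' = F z`, the same squeeze gives `F z' = F_C z'`, and since `F_C` separates into one-variable
weighted least-squares problems, its minimiser `z'` solves the normal equations `V z' = W x`;
the valence matrix `V` is diagonal and invertible because every warping path visits every row.
-/

open Matrix

/-- A warping path of order `m × n` with 1-indexed points. -/
def IsWarpingPath (m n : ℕ) (p : List (ℕ × ℕ)) : Prop :=
  p ≠ [] ∧
  p.head? = some (1, 1) ∧
  p.getLast? = some (m, n) ∧
  (∀ q ∈ p, 1 ≤ q.1 ∧ q.1 ≤ m ∧ 1 ≤ q.2 ∧ q.2 ≤ n) ∧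
  ∀ l, l + 1 < p.length →
    (p.getD (l + 1) (0, 0) = ((p.getD l (0, 0)).1 + 1, (p.getD l (0, 0)).2) ∨
     p.getD (l + 1) (0, 0) = ((p.getD l (0, 0)).1, (p.getD l (0, 0)).2 + 1) ∨
     p.getD (l + 1) (0, 0) = ((p.getD l (0, 0)).1 + 1, (p.getD l (0, 0)).2 + 1))

/-- Value of a time series `x ∈ ℝ^m` at the 1-indexed time point `i`. -/
def tsVal {m : ℕ} (x : Fin m → ℝ) (i : ℕ) : ℝ :=
  if h : i - 1 < m then x ⟨i - 1, h⟩ else 0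

/-- Cost of aligning `x` and `y` along warping path `p`. -/
def cost {m n : ℕ} (p : List (ℕ × ℕ)) (x : Fin m → ℝ) (y : Fin n → ℝ) : ℝ :=
  (p.map fun q => (tsVal x q.1 - tsVal y q.2) ^ 2).sum

/-- Squared DTW distance. -/
noncomputable def dtwSq (m n : ℕ) (x : Fin m → ℝ) (y : Fin n → ℝ) : ℝ :=
  sInf {c | ∃ p, IsWarpingPath m n p ∧ c = cost p x y}

/-- DTW distance. -/
noncomputable def dtw (m n : ℕ) (x : Fin m → ℝ) (y : Fin n → ℝ) : ℝ :=
  Real.sqrt (dtwSq m n x y)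

/-- Warping matrix of a warping path. -/
def warpMat (m n : ℕ) (p : List (ℕ × ℕ)) : Matrix (Fin m) (Fin n) ℝ :=
  fun i j => if ((i : ℕ) + 1, (j : ℕ) + 1) ∈ p then 1 else 0

/-- Valence matrix of a warping path. -/
def valMat (m n : ℕ) (p : List (ℕ × ℕ)) : Matrix (Fin m) (Fin m) ℝ :=
  Matrix.diagonal fun i => ∑ j, warpMat m n p i j

/-- First embedding matrix `Φ` induced by a warping path. -/
def embX (m : ℕ) (p : List (ℕ × ℕ)) : Matrix (Fin p.length) (Fin m) ℝ :=
  fun l i => if (p.get l).1 = (i : ℕ) + 1 then 1 else 0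

/-- Second embedding matrix `Ψ` induced by a warping path. -/
def embY (n : ℕ) (p : List (ℕ × ℕ)) : Matrix (Fin p.length) (Fin n) ℝ :=
  fun l j => if (p.get l).2 = (j : ℕ) + 1 then 1 else 0

section MajorizeMinimize

variable {α κ : Type*}

/-- `z' ∈ α(z)`, witnessed by a configuration `C` that is optimal at `z`: the surrogate `G C`
touches `F` at `z` and is minimised at `z'`. -/
def IsMMStep (F : α → ℝ) (G : κ → α → ℝ) (C : κ) (z z' : α) : Prop :=
  G C z = F z ∧ ∀ x, G C z' ≤ G C x

variable {F : α → ℝ} {G : κ → α → ℝ} {C : κ} {z z' : α}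

lemma IsMMStep.surrogate_le (h : IsMMStep F G C z z') : G C z' ≤ F z :=
  h.1 ▸ h.2 z

lemma IsMMStep.apply_eq_surrogate_of_apply_eq (h : IsMMStep F G C z z')
    (hC : ∀ x, F x ≤ G C x) (heq : F z' = F z) : F z' = G C z' :=
  le_antisymm (hC z') (heq ▸ h.surrogate_le)

/-- Two steps through the same configuration reach the same surrogate minimum, which lies
between the values of `F` before and after each step. -/
lemma IsMMStep.apply_le_of_isMMStep {z₁ z₁' z₂ z₂' : α} (h₁ : IsMMStep F G C z₁ z₁')
    (h₂ : IsMMStep F G C z₂ z₂') (hC : ∀ x, F x ≤ G C x) : F z₁' ≤ F z₂ :=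
  calc F z₁' ≤ G C z₁' := hC z₁'
    _ ≤ G C z₂' := h₁.2 z₂'
    _ ≤ F z₂ := h₂.surrogate_le

theorem not_exists_isMMStep_strictAnti {S : Set κ} (hS : S.Finite)
    (hGF : ∀ C ∈ S, ∀ x, F x ≤ G C x) :
    ¬ ∃ z : ℕ → α, ∀ t, (∃ C ∈ S, IsMMStep F G C (z t) (z (t + 1))) ∧ F (z (t + 1)) < F (z t) := by
  rintro ⟨z, hz⟩
  choose C hCS hstep using fun t => (hz t).1
  have hdec t := (hz t).2
  have hanti : StrictAnti (F ∘ z) := strictAnti_nat_of_succ_lt hdec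
  have hne : ∀ s t, s + 1 < t → C s ≠ C t := fun s t hst hC =>
    (hanti hst).not_ge ((hstep s).apply_le_of_isMMStep (hC ▸ hstep t) (hGF _ (hCS s)))
  -- Consecutive steps may share a configuration whose surrogate has several minimisers.
  have hinj : Function.Injective fun t => C (2 * t) := by
    intro a b hab
    by_contra hab'
    rcases Nat.lt_or_gt_of_ne hab' with h | h
    · exact hne _ _ (by omega) hab
    · exact hne _ _ (by omega) hab.symm
  exact Set.infinite_of_injective_forall_mem hinj (fun t => hCS _) hS

end MajorizeMinimize

theorem sum_mul_eq_sum_mul_of_isMinOn_sum_sq {ι : Type*} (s : Finset ι) (w y : ι → ℝ) {c : ℝ}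
    (hc : IsMinOn (fun t => ∑ a ∈ s, w a * (t - y a) ^ 2) Set.univ c) :
    (∑ a ∈ s, w a) * c = ∑ a ∈ s, w a * y a := by
  have hderiv : HasDerivAt (fun t => ∑ a ∈ s, w a * (t - y a) ^ 2)
      (∑ a ∈ s, w a * (2 * (c - y a))) c :=
    HasDerivAt.fun_sum fun a _ => by
      simpa using (((hasDerivAt_id c).sub_const (y a)).pow 2).const_mul (w a)
  have hzero := (hc.isLocalMin Filter.univ_mem).hasDerivAt_eq_zero hderiv
  simp only [mul_sub, mul_left_comm _ (2 : ℝ), ← Finset.mul_sum, Finset.sum_sub_distrib] at hzero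
  rw [Finset.sum_mul]
  linarith

theorem isMinOn_apply_of_isMinOn_sum {ι β M : Type*} [Fintype ι] [DecidableEq ι]
    [AddCommMonoid M] [PartialOrder M] [IsOrderedCancelAddMonoid M] {G : ι → β → M}
    {z : ι → β} (hz : IsMinOn (fun x : ι → β => ∑ i, G i (x i)) Set.univ z) (i : ι) :
    IsMinOn (G i) Set.univ (z i) := by
  intro t _
  have h := hz (Set.mem_univ (Function.update z i t))
  simp only [Set.mem_ofPred_eq, Function.apply_update (f := G),
    Finset.sum_update_of_mem (Finset.mem_univ i),
    Finset.sum_eq_add_sum_sdiff_singleton_of_mem (Finset.mem_univ i) fun i => G i (z i)] at h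
  exact le_of_add_le_add_right h

theorem exists_apply_eq_of_apply_succ_le {f : ℕ → ℕ} {v : ℕ} :
    ∀ {k : ℕ}, (∀ l < k, f (l + 1) ≤ f l + 1) → f 0 ≤ v → v ≤ f k → ∃ l ≤ k, f l = v
  | 0, _, h0, hk => ⟨0, le_rfl, le_antisymm h0 hk⟩
  | k + 1, hf, h0, hk => by
    by_cases hv : v ≤ f k
    · obtain ⟨l, hl, hfl⟩ := exists_apply_eq_of_apply_succ_le (fun l hl => hf l (by omega)) h0 hv
      exact ⟨l, by omega, hfl⟩
    · exact ⟨k + 1, le_rfl, by have := hf k (by omega); omega⟩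

theorem List.finite_setOf_nodup_forall_mem {α : Type*} (s : Finset α) :
    {l : List α | l.Nodup ∧ ∀ x ∈ l, x ∈ s}.Finite := by
  refine ((List.finite_length_le s s.card).image (List.map Subtype.val)).subset ?_
  rintro l ⟨hnd, hs⟩
  lift l to List s using hs
  exact ⟨l, by simpa using (hnd.of_map _).length_le_card, rfl⟩

namespace IsWarpingPath

variable {m n : ℕ} {p : List (ℕ × ℕ)}

lemma isChain_map_coordSum (hp : IsWarpingPath m n p) :
    (p.map fun q => q.1 + q.2).IsChain (· < ·) := by
  rw [List.isChain_map, List.isChain_iff_getElem]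
  intro l hl
  have hstep := hp.2.2.2.2 l hl
  rw [List.getD_eq_getElem p _ hl, List.getD_eq_getElem p _ (by omega)] at hstep
  rcases hstep with h | h | h <;> (rw [h]; dsimp only; omega)

lemma nodup (hp : IsWarpingPath m n p) : p.Nodup :=
  hp.isChain_map_coordSum.pairwise.nodup.of_map _

lemma mem_Icc_prod_Icc (hp : IsWarpingPath m n p) {q : ℕ × ℕ} (hq : q ∈ p) :
    q ∈ Finset.Icc 1 m ×ˢ Finset.Icc 1 n := by
  obtain ⟨h1, h2, h3, h4⟩ := hp.2.2.2.1 q hq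
  simp only [Finset.mem_product, Finset.mem_Icc]
  omega

lemma finite_setOf (m n : ℕ) : {p : List (ℕ × ℕ) | IsWarpingPath m n p}.Finite :=
  (List.finite_setOf_nodup_forall_mem (Finset.Icc 1 m ×ˢ Finset.Icc 1 n)).subset
    fun _ hp => ⟨hp.nodup, fun _ => hp.mem_Icc_prod_Icc⟩

/-- The first coordinate runs from `1` to `m` in steps of at most one, so it takes every value
in between. -/
lemma exists_mem_of_mem_Icc (hp : IsWarpingPath m n p) {i : ℕ} (hi : i ∈ Finset.Icc 1 m) :
    ∃ j, (i, j) ∈ p := by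
  have hlen : 0 < p.length := List.length_pos_iff.mpr hp.1
  have hfirst : p.getD 0 (0, 0) = (1, 1) := by
    simp [List.getD_eq_getElem?_getD, ← List.head?_eq_getElem?, hp.2.1]
  have hlast : p.getD (p.length - 1) (0, 0) = (m, n) := by
    simp [List.getD_eq_getElem?_getD, ← List.getLast?_eq_getElem?, hp.2.2.1]
  have hsteps : ∀ l < p.length - 1, (p.getD (l + 1) (0, 0)).1 ≤ (p.getD l (0, 0)).1 + 1 := by
    intro l hl
    rcases hp.2.2.2.2 l (by omega) with h | h | h <;> simp only [h] <;> omega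
  rw [Finset.mem_Icc] at hi
  obtain ⟨l, hl, hli⟩ := exists_apply_eq_of_apply_succ_le (f := fun l => (p.getD l (0, 0)).1)
    (v := i) hsteps (by rw [hfirst]; exact hi.1) (by rw [hlast]; exact hi.2)
  refine ⟨(p.getD l (0, 0)).2, ?_⟩
  rw [← hli, List.getD_eq_getElem p _ (by omega)]
  exact List.getElem_mem _

lemma sum_warpMat_pos (hp : IsWarpingPath m n p) (i : Fin m) : 0 < ∑ j, warpMat m n p i j := by
  obtain ⟨j, hj⟩ := hp.exists_mem_of_mem_Icc (i := (i : ℕ) + 1) (by simp)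
  have hjn := Finset.mem_Icc.mp (Finset.mem_product.mp (hp.mem_Icc_prod_Icc hj)).2
  refine Finset.sum_pos' (fun j _ => by unfold warpMat; split_ifs <;> norm_num)
    ⟨⟨j - 1, by omega⟩, Finset.mem_univ _, ?_⟩
  rw [warpMat, if_pos (by rwa [Nat.sub_add_cancel hjn.1])]
  exact one_pos

lemma sum_map_eq_sum_fin (hp : IsWarpingPath m n p) (g : ℕ × ℕ → ℝ) :
    (p.map g).sum = ∑ i : Fin m, ∑ j : Fin n,
      if ((i : ℕ) + 1, (j : ℕ) + 1) ∈ p then g ((i : ℕ) + 1, (j : ℕ) + 1) else 0 := by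
  classical
  let e : Fin m × Fin n → ℕ × ℕ := fun ij => ((ij.1 : ℕ) + 1, (ij.2 : ℕ) + 1)
  have he : Function.Injective e := fun a b h => by
    simp only [e, Prod.mk.injEq, add_left_inj] at h
    exact Prod.ext (Fin.ext h.1) (Fin.ext h.2)
  have himage : (Finset.univ.filter fun ij => e ij ∈ p).image e = p.toFinset := by
    ext q
    simp only [Finset.mem_image, Finset.mem_filter, Finset.mem_univ, true_and, List.mem_toFinset]
    refine ⟨fun ⟨ij, hij, hq⟩ => hq ▸ hij, fun hq => ?_⟩
    obtain ⟨h1, h2, h3, h4⟩ := hp.2.2.2.1 q hq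
    have hq' : e (⟨q.1 - 1, by omega⟩, ⟨q.2 - 1, by omega⟩) = q := by
      simp only [e]
      ext <;> dsimp only <;> omega
    exact ⟨_, hq'.symm ▸ hq, hq'⟩
  rw [← List.sum_toFinset g hp.nodup, ← himage, Finset.sum_image he.injOn, Finset.sum_filter,
    Fintype.sum_prod_type]

end IsWarpingPath

lemma tsVal_val_add_one {m : ℕ} (x : Fin m → ℝ) (i : Fin m) : tsVal x ((i : ℕ) + 1) = x i := by
  simp [tsVal]

lemma cost_eq_sum_warpMat {m n : ℕ} {p : List (ℕ × ℕ)} (hp : IsWarpingPath m n p)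
    (x : Fin m → ℝ) (y : Fin n → ℝ) :
    cost p x y = ∑ i, ∑ j, warpMat m n p i j * (x i - y j) ^ 2 := by
  simp only [cost, hp.sum_map_eq_sum_fin, warpMat, tsVal_val_add_one, ite_mul, one_mul,
    zero_mul]

lemma cost_nonneg {m n : ℕ} (p : List (ℕ × ℕ)) (x : Fin m → ℝ) (y : Fin n → ℝ) :
    0 ≤ cost p x y :=
  List.sum_nonneg fun _ hc => by
    obtain ⟨q, _, rfl⟩ := List.mem_map.mp hc
    positivity

lemma dtwSq_le_cost {m n : ℕ} {p : List (ℕ × ℕ)} (hp : IsWarpingPath m n p)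
    (x : Fin m → ℝ) (y : Fin n → ℝ) : dtwSq m n x y ≤ cost p x y :=
  csInf_le ⟨0, by rintro _ ⟨p', _, rfl⟩; exact cost_nonneg p' x y⟩ ⟨p, hp, rfl⟩

section Frechet

variable {N n : ℕ} (len : Fin N → ℕ) (X : (k : Fin N) → Fin (len k) → ℝ)

/-- The Fréchet function `F` of the sample `X` under the squared DTW distance. -/
noncomputable def frechetDTW (z : Fin n → ℝ) : ℝ :=
  (1 / N : ℝ) * ∑ k, dtwSq n (len k) z (X k)

/-- The quadratic `F_C` of a configuration `C`, i.e. of one warping path per sample. -/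
noncomputable def frechetCost (C : Fin N → List (ℕ × ℕ)) (z : Fin n → ℝ) : ℝ :=
  (1 / N : ℝ) * ∑ k, cost (C k) z (X k)

def warpingConfigs (n : ℕ) : Set (Fin N → List (ℕ × ℕ)) :=
  {C | ∀ k, IsWarpingPath n (len k) (C k)}

lemma finite_warpingConfigs (n : ℕ) : (warpingConfigs len n).Finite :=
  Set.Finite.pi' fun k => IsWarpingPath.finite_setOf n (len k)

variable {len} {C : Fin N → List (ℕ × ℕ)}

lemma frechetDTW_le_frechetCost (hC : C ∈ warpingConfigs len n) (z : Fin n → ℝ) :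
    frechetDTW len X z ≤ frechetCost len X C z :=
  mul_le_mul_of_nonneg_left (Finset.sum_le_sum fun k _ => dtwSq_le_cost (hC k) z (X k))
    (by positivity)

lemma sum_warpMat_mul_eq_of_isMinOn (hC : C ∈ warpingConfigs len n) {z : Fin n → ℝ}
    (hz : IsMinOn (fun x => ∑ k, cost (C k) x (X k)) Set.univ z) (i : Fin n) :
    (∑ k, ∑ j, warpMat n (len k) (C k) i j) * z i =
      ∑ k, ∑ j, warpMat n (len k) (C k) i j * X k j := by
  classical
  let G : Fin n → ℝ → ℝ := fun i s =>
    ∑ a : (k : Fin N) × Fin (len k), warpMat n (len a.1) (C a.1) i a.2 * (s - X a.1 a.2) ^ 2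
  have hsep : (fun x => ∑ k, cost (C k) x (X k)) = fun x => ∑ i, G i (x i) := by
    ext x
    simp only [G, cost_eq_sum_warpMat (hC _), Fintype.sum_sigma]
    exact Finset.sum_comm
  have := sum_mul_eq_sum_mul_of_isMinOn_sum_sq Finset.univ _ _
    (isMinOn_apply_of_isMinOn_sum (G := G) (hsep ▸ hz) i)
  simpa only [Fintype.sum_sigma] using this

theorem eq_inv_mulVec_of_isMinOn (hN : 0 < N) (hC : C ∈ warpingConfigs len n) {z : Fin n → ℝ}
    (hz : ∀ x : Fin n → ℝ, frechetCost len X C z ≤ frechetCost len X C x) :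
    z = (∑ k, valMat n (len k) (C k))⁻¹ *ᵥ ∑ k, warpMat n (len k) (C k) *ᵥ X k := by
  have hmin : IsMinOn (fun x => ∑ k, cost (C k) x (X k)) Set.univ z :=
    fun x _ => le_of_mul_le_mul_left (hz x) (by positivity)
  set d : Fin n → ℝ := fun i => ∑ k, ∑ j, warpMat n (len k) (C k) i j
  have hd : ∀ i, 0 < d i := fun i =>
    Finset.sum_pos (fun k _ => (hC k).sum_warpMat_pos i) ⟨⟨0, hN⟩, Finset.mem_univ _⟩
  have hV : ∑ k, valMat n (len k) (C k) = diagonal d := by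
    have hd_sum : d = ∑ k, fun i => ∑ j, warpMat n (len k) (C k) i j :=
      funext fun i => by rw [Finset.sum_apply]
    rw [hd_sum]
    exact (map_sum (diagonalAddMonoidHom (Fin n) ℝ) _ _).symm
  let := (diagonal d).invertibleOfIsUnitDet
    (by simpa [det_diagonal, Finset.prod_ne_zero_iff] using fun i => (hd i).ne')
  rw [hV]
  refine (inv_mulVec_eq_vec (funext fun i => ?_)).symm
  rw [mulVec_diagonal, Finset.sum_apply, sum_warpMat_mul_eq_of_isMinOn X hC hmin i]
  rfl

end Frechet

theorem mm_finite_convergence_general (n N : ℕ) (hN : 0 < N) (len : Fin N → ℕ)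
    (X : (k : Fin N) → Fin (len k) → ℝ) :
    (¬ ∃ zs : ℕ → (Fin n → ℝ), ∀ t : ℕ,
      (∃ C : Fin N → List (ℕ × ℕ),
        (∀ k, IsWarpingPath n (len k) (C k)) ∧
        (1 / N : ℝ) * ∑ k, cost (C k) (zs t) (X k) =
          (1 / N : ℝ) * ∑ k, dtwSq n (len k) (zs t) (X k) ∧
        ∀ x : Fin n → ℝ,
          (1 / N : ℝ) * ∑ k, cost (C k) (zs (t + 1)) (X k) ≤
          (1 / N : ℝ) * ∑ k, cost (C k) x (X k)) ∧
      (1 / N : ℝ) * ∑ k, dtwSq n (len k) (zs (t + 1)) (X k) <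
        (1 / N : ℝ) * ∑ k, dtwSq n (len k) (zs t) (X k)) ∧
    (∀ z z' : Fin n → ℝ,
      (∃ C : Fin N → List (ℕ × ℕ),
        (∀ k, IsWarpingPath n (len k) (C k)) ∧
        (1 / N : ℝ) * ∑ k, cost (C k) z (X k) =
          (1 / N : ℝ) * ∑ k, dtwSq n (len k) z (X k) ∧
        ∀ x : Fin n → ℝ,
          (1 / N : ℝ) * ∑ k, cost (C k) z' (X k) ≤
          (1 / N : ℝ) * ∑ k, cost (C k) x (X k)) →
      (1 / N : ℝ) * ∑ k, dtwSq n (len k) z' (X k) =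
        (1 / N : ℝ) * ∑ k, dtwSq n (len k) z (X k) →
      ∃ C : Fin N → List (ℕ × ℕ),
        (∀ k, IsWarpingPath n (len k) (C k)) ∧
        (1 / N : ℝ) * ∑ k, dtwSq n (len k) z' (X k) =
          (1 / N : ℝ) * ∑ k, cost (C k) z' (X k) ∧
        z' = (∑ k, valMat n (len k) (C k))⁻¹.mulVec
          (∑ k, (warpMat n (len k) (C k)).mulVec (X k))) := by
  refine ⟨not_exists_isMMStep_strictAnti (finite_warpingConfigs len n)
    fun C hC => frechetDTW_le_frechetCost X hC, ?_⟩
  rintro z z' ⟨C, hC, hstep⟩ heq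
  change IsMMStep (frechetDTW len X) (frechetCost len X) C z z' at hstep
  exact ⟨C, hC, hstep.apply_eq_surrogate_of_apply_eq (frechetDTW_le_frechetCost X hC) heq,
    eq_inv_mulVec_of_isMinOn X hN hC hstep.2⟩

/-- finite convergence of the MM algorithm. There is no infinite
MM trajectory along which the Fréchet function strictly decreases; and if an MM
update does not decrease the Fréchet value (the termination criterion), then the
resulting point satisfies the necessary conditions (C1) and (C2). -/
theorem mm_finite_convergence (n N : ℕ) (hN : 0 < N) (hn : 1 ≤ n)
    (len : Fin N → ℕ) (hlen : ∀ k, 1 ≤ len k)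
    (X : (k : Fin N) → Fin (len k) → ℝ) :
    (¬ ∃ zs : ℕ → (Fin n → ℝ), ∀ t : ℕ,
      (∃ C : Fin N → List (ℕ × ℕ),
        (∀ k, IsWarpingPath n (len k) (C k)) ∧
        (1 / N : ℝ) * ∑ k, cost (C k) (zs t) (X k) =
          (1 / N : ℝ) * ∑ k, dtwSq n (len k) (zs t) (X k) ∧
        ∀ x : Fin n → ℝ,
          (1 / N : ℝ) * ∑ k, cost (C k) (zs (t + 1)) (X k) ≤
          (1 / N : ℝ) * ∑ k, cost (C k) x (X k)) ∧
      (1 / N : ℝ) * ∑ k, dtwSq n (len k) (zs (t + 1)) (X k) <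
        (1 / N : ℝ) * ∑ k, dtwSq n (len k) (zs t) (X k)) ∧
    (∀ z z' : Fin n → ℝ,
      (∃ C : Fin N → List (ℕ × ℕ),
        (∀ k, IsWarpingPath n (len k) (C k)) ∧
        (1 / N : ℝ) * ∑ k, cost (C k) z (X k) =
          (1 / N : ℝ) * ∑ k, dtwSq n (len k) z (X k) ∧
        ∀ x : Fin n → ℝ,
          (1 / N : ℝ) * ∑ k, cost (C k) z' (X k) ≤
          (1 / N : ℝ) * ∑ k, cost (C k) x (X k)) →
      (1 / N : ℝ) * ∑ k, dtwSq n (len k) z' (X k) =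
        (1 / N : ℝ) * ∑ k, dtwSq n (len k) z (X k) →
      ∃ C : Fin N → List (ℕ × ℕ),
        (∀ k, IsWarpingPath n (len k) (C k)) ∧
        (1 / N : ℝ) * ∑ k, dtwSq n (len k) z' (X k) =
          (1 / N : ℝ) * ∑ k, cost (C k) z' (X k) ∧
        z' = (∑ k, valMat n (len k) (C k))⁻¹.mulVec
          (∑ k, (warpMat n (len k) (C k)).mulVec (X k))) :=
  mm_finite_convergence_general n N hN len X
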